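/- arXiv:2212.11536 — 4 statements merged into one kernel-verified Lean document; each statement's English description precedes it below -/
import Mathlib

section
/- Let k be a positive integer, m ≥ 1, and let P ⊆ ℝ^m be a set of k distinct points. Then there exists a k-dimensional subspace Π_P of the space X of real polynomials in m variables of maximum (l∞) degree at most k−1 such that the evaluation map from Π_P to ℝ^P (sending a polynomial to its values on P) is a linear isomorphism (i.e., P is unisolvent for Π_P). -/
open MvPolynomial
set_option maxHeartbeats 1000000

noncomputable def idx {m : ℕ} (hm : 1 ≤ m) (p q : Fin m → ℝ) : Fin m :=
  if h : ∃ i, p i ≠ q i then h.choose else ⟨0, hm⟩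

lemma idx_spec {m : ℕ} (hm : 1 ≤ m) {p q : Fin m → ℝ} (h : p ≠ q) :
    p (idx hm p q) ≠ q (idx hm p q) := by
  have h' : ∃ i, p i ≠ q i := Function.ne_iff.mp h
  rw [idx, dif_pos h']
  exact h'.choose_spec

noncomputable def lag {m : ℕ} (hm : 1 ≤ m) (P : Finset (Fin m → ℝ)) (p : Fin m → ℝ) :
    MvPolynomial (Fin m) ℝ :=
  ∏ q ∈ P.erase p,
    C (p (idx hm p q) - q (idx hm p q))⁻¹ * (X (idx hm p q) - C (q (idx hm p q)))

lemma eval_lag {m : ℕ} (hm : 1 ≤ m) (P : Finset (Fin m → ℝ)) (p r : Fin m → ℝ) :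
    eval r (lag hm P p) =
      ∏ q ∈ P.erase p, (p (idx hm p q) - q (idx hm p q))⁻¹ * (r (idx hm p q) - q (idx hm p q)) := by
  simp [lag, eval_prod]

lemma eval_lag_self {m : ℕ} (hm : 1 ≤ m) (P : Finset (Fin m → ℝ)) (p : Fin m → ℝ) :
    eval p (lag hm P p) = 1 := by
  rw [eval_lag]
  refine Finset.prod_eq_one fun q hq => ?_
  have hne : p ≠ q := (Finset.ne_of_mem_erase hq).symm
  exact inv_mul_cancel₀ (sub_ne_zero.mpr (idx_spec hm hne))

lemma eval_lag_ne {m : ℕ} (hm : 1 ≤ m) (P : Finset (Fin m → ℝ)) {p r : Fin m → ℝ}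
    (hr : r ∈ P) (hne : r ≠ p) : eval r (lag hm P p) = 0 := by
  rw [eval_lag]
  refine Finset.prod_eq_zero (Finset.mem_erase.mpr ⟨hne, hr⟩) ?_
  simp

lemma lag_mem {m k : ℕ} (hm : 1 ≤ m) (hk : 0 < k) (P : Finset (Fin m → ℝ))
    (hP : P.card = k) {p : Fin m → ℝ} (hp : p ∈ P) :
    lag hm P p ∈ restrictDegree (Fin m) ℝ (k - 1) := by
  refine restrictTotalDegree_le_restrictDegree _ _ _ ((mem_restrictTotalDegree _ _ _).mpr ?_)
  rw [lag]
  refine le_trans (totalDegree_finset_prod _ _) ?_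
  calc ∑ q ∈ P.erase p, (C (p (idx hm p q) - q (idx hm p q))⁻¹ *
          (X (idx hm p q) - C (q (idx hm p q)))).totalDegree
      ≤ ∑ _q ∈ P.erase p, 1 := by
        refine Finset.sum_le_sum fun q _ => ?_
        calc ((C (p (idx hm p q) - q (idx hm p q))⁻¹ : MvPolynomial (Fin m) ℝ) *
              (X (idx hm p q) - C (q (idx hm p q)))).totalDegree
            ≤ _ + _ := totalDegree_mul _ _
          _ ≤ 0 + 1 := by
              gcongr
              · exact le_of_eq (totalDegree_C _)
              · exact le_trans (totalDegree_sub _ _)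
                  (by simp [totalDegree_X])
    _ = (P.erase p).card := by simp
    _ ≤ k - 1 := by rw [Finset.card_erase_of_mem hp, hP]

/-- For any set `P` of `k` distinct points in `ℝ^m` there exists a
`k`-dimensional subspace `Π_P` of the space of polynomials of maximum (`l∞`) degree
at most `k-1` such that evaluation at the points of `P` is a linear isomorphism
from `Π_P` to `ℝ^P`, i.e. `P` is unisolvent with respect to `Π_P`. -/
theorem exists_unisolvent_subspace (m k : ℕ) (hm : 1 ≤ m) (hk : 0 < k)
    (P : Finset (Fin m → ℝ)) (hP : P.card = k) :
    ∃ V : Submodule ℝ (MvPolynomial (Fin m) ℝ),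
      V ≤ restrictDegree (Fin m) ℝ (k - 1) ∧
      Module.finrank ℝ V = k ∧
      Function.Bijective
        (fun Q : V => fun p : P => eval (p : Fin m → ℝ) (Q : MvPolynomial (Fin m) ℝ)) := by
  classical
  -- evaluation linear map
  let E : MvPolynomial (Fin m) ℝ →ₗ[ℝ] (P → ℝ) :=
    { toFun := fun Q r => eval (r : Fin m → ℝ) Q
      map_add' := fun a b => by funext r; simp
      map_smul' := fun c a => by funext r; simp }
  let ℓ : P → MvPolynomial (Fin m) ℝ := fun p => lag hm P (p : Fin m → ℝ)
  have hEℓ : ∀ p : P, E (ℓ p) = Pi.single p 1 := by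
    intro p
    funext r
    by_cases h : r = p
    · subst h
      simp [E, ℓ, eval_lag_self]
    · have : (r : Fin m → ℝ) ≠ (p : Fin m → ℝ) := fun hc => h (Subtype.ext hc)
      simp [E, ℓ, eval_lag_ne hm P r.2 this, Pi.single_eq_of_ne h]
  have hli' : LinearIndependent ℝ (fun p : P => (Pi.single p 1 : P → ℝ)) := by
    refine Fintype.linearIndependent_iff.mpr fun c hc p => ?_
    have := congrFun hc p
    simpa [Finset.sum_apply, Pi.single_apply] using this
  have hli : LinearIndependent ℝ ℓ := by
    apply LinearIndependent.of_comp E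
    convert hli' using 1
    funext p
    exact hEℓ p
  set V : Submodule ℝ (MvPolynomial (Fin m) ℝ) := Submodule.span ℝ (Set.range ℓ) with hV
  have hle : V ≤ restrictDegree (Fin m) ℝ (k - 1) := by
    rw [hV, Submodule.span_le]
    rintro _ ⟨p, rfl⟩
    exact lag_mem hm hk P hP p.2
  have hcard : Fintype.card P = k := by rw [Fintype.card_coe, hP]
  have hfin : Module.finrank ℝ V = k := by
    rw [hV, finrank_span_eq_card hli, hcard]
  have hFD : FiniteDimensional ℝ V := by
    rw [hV]
    exact FiniteDimensional.span_of_finite ℝ (Set.finite_range ℓ)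
  refine ⟨V, hle, hfin, ?_⟩
  let F : V →ₗ[ℝ] (P → ℝ) := E.comp V.subtype
  have hsurj : Function.Surjective F := by
    rw [← LinearMap.range_eq_top, ← top_le_iff, ← (Pi.basisFun ℝ P).span_eq,
      Submodule.span_le]
    rintro _ ⟨p, rfl⟩
    refine ⟨⟨ℓ p, Submodule.subset_span ⟨p, rfl⟩⟩, ?_⟩
    simp only [F, LinearMap.comp_apply, Submodule.subtype_apply]
    rw [hEℓ p, Pi.basisFun_apply]
  have hinj : Function.Injective F := by
    rw [LinearMap.injective_iff_surjective_of_finrank_eq_finrank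
      (by rw [hfin, Module.finrank_pi, hcard])]
    exact hsurj
  exact ⟨hinj, hsurj⟩
end

section
/- Let A ⊆ ℕ^m be a finite downward closed set, and let P_A = {(p_{α_1,1},…,p_{α_m,m}) : α ∈ A} be a non-tensorial grid built from pairwise distinct nodes p_{0,i},…,p_{n_i,i} ∈ ℝ in each coordinate i, where n_i = max_{α∈A} α_i. Then P_A is unisolvent with respect to Π_A = span{x^α : α ∈ A}: the only polynomial in Π_A vanishing at every point of P_A is the zero polynomial. -/
/-!
Work in the Newton basis `N_α = ∏ᵢ ∏_{j < αᵢ} (Xᵢ - p i j)`. Since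
`Xᵢ * N_α = N_{α + eᵢ} + p i (αᵢ) * N_α`, every monomial `X^α` lies in the span of the
`N_β` with `β ≤ α`, so for a downward closed `A` the space `Π_A` is spanned by `N_α`, `α ∈ A`.
At the grid point of `α`, `N_β` vanishes unless `β ≤ α`, and `N_α` does not vanish because
the nodes are distinct. The evaluation matrix is thus triangular with respect to `≤`, and a
combination of the `N_β` vanishing on the grid must have zero coefficients: evaluate at a
minimal index of its support.
-/

open MvPolynomial Finset

theorem eq_zero_of_mem_span_of_triangular {ι R M : Type*} [PartialOrder ι] [Semiring R]
    [NoZeroDivisors R] [AddCommMonoid M] [Module R M] (f : ι → M) (φ : ι → M →ₗ[R] R)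
    {s : Set ι} (h_lower : ∀ α β, φ α (f β) ≠ 0 → β ≤ α) (h_diag : ∀ α ∈ s, φ α (f α) ≠ 0)
    {v : M} (hv : v ∈ Submodule.span R (f '' s)) (hφ : ∀ α ∈ s, φ α v = 0) : v = 0 := by
  obtain ⟨l, hls, rfl⟩ := (Finsupp.mem_span_image_iff_linearCombination R).1 hv
  suffices l = 0 by simp [this]
  by_contra hl
  obtain ⟨α, hα, hmin⟩ := l.support.exists_minimal (Finsupp.support_nonempty_iff.2 hl)
  have hαs : α ∈ s := hls hα
  have h_eval : φ α (Finsupp.linearCombination R f l) = l α * φ α (f α) := by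
    rw [Finsupp.linearCombination_apply, Finsupp.sum, map_sum, Finset.sum_eq_single_of_mem α hα]
    · simp
    · intro β hβ hβα
      rw [map_smul, smul_eq_mul]
      by_contra h
      have hβα' := h_lower α β (right_ne_zero_of_mul h)
      exact hβα (le_antisymm hβα' (hmin hβ hβα'))
  exact mul_ne_zero (Finsupp.mem_support_iff.1 hα) (h_diag α hαs) (h_eval ▸ hφ α hαs)

section Newton

variable {σ R : Type*} [Fintype σ] [CommRing R]

noncomputable def newtonMonomial (p : σ → ℕ → R) (α : σ →₀ ℕ) : MvPolynomial σ R :=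
  ∏ i, ∏ j ∈ range (α i), (X i - C (p i j))

theorem newtonMonomial_add_single (p : σ → ℕ → R) (α : σ →₀ ℕ) (i : σ) :
    newtonMonomial p (α + Finsupp.single i 1) = (X i - C (p i (α i))) * newtonMonomial p α := by
  classical
  simp only [newtonMonomial, Finsupp.add_apply, Finsupp.single_apply]
  rw [← mul_prod_erase univ _ (mem_univ i), ← mul_prod_erase univ _ (mem_univ i),
    if_pos rfl, prod_range_succ, ← mul_assoc, mul_comm (X i - _)]
  congr 1
  refine prod_congr rfl fun k hk => ?_
  rw [if_neg (ne_of_mem_erase hk).symm, add_zero]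

theorem X_mul_newtonMonomial (p : σ → ℕ → R) (α : σ →₀ ℕ) (i : σ) :
    X i * newtonMonomial p α =
      newtonMonomial p (α + Finsupp.single i 1) + C (p i (α i)) * newtonMonomial p α := by
  rw [newtonMonomial_add_single]; ring

theorem X_mul_mem_span_newtonMonomial (p : σ → ℕ → R) {α : σ →₀ ℕ} (i : σ)
    {v : MvPolynomial σ R} (hv : v ∈ Submodule.span R (newtonMonomial p '' Set.Iic α)) :
    X i * v ∈ Submodule.span R (newtonMonomial p '' Set.Iic (α + Finsupp.single i 1)) := by
  suffices h : Submodule.span R (newtonMonomial p '' Set.Iic α) ≤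
      (Submodule.span R (newtonMonomial p '' Set.Iic (α + Finsupp.single i 1))).comap
        (LinearMap.mulLeft R (X i)) from h hv
  refine Submodule.span_le.2 ?_
  rintro _ ⟨β, hβ, rfl⟩
  rw [SetLike.mem_coe, Submodule.mem_comap, LinearMap.mulLeft_apply, X_mul_newtonMonomial,
    ← smul_eq_C_mul]
  exact add_mem (Submodule.subset_span ⟨_, Set.mem_Iic.2 (add_le_add hβ le_rfl), rfl⟩)
    (Submodule.smul_mem _ _
      (Submodule.subset_span ⟨β, Set.mem_Iic.2 (hβ.trans le_self_add), rfl⟩))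

theorem X_pow_mul_mem_span_newtonMonomial (p : σ → ℕ → R) {α : σ →₀ ℕ} (i : σ) (k : ℕ)
    {v : MvPolynomial σ R} (hv : v ∈ Submodule.span R (newtonMonomial p '' Set.Iic α)) :
    X i ^ k * v ∈ Submodule.span R (newtonMonomial p '' Set.Iic (α + Finsupp.single i k)) := by
  induction k with
  | zero => simpa using hv
  | succ k ih =>
    rw [pow_succ', mul_assoc, Finsupp.single_add, ← add_assoc]
    exact X_mul_mem_span_newtonMonomial p i ih

theorem monomial_one_mem_span_newtonMonomial (p : σ → ℕ → R) (α : σ →₀ ℕ) :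
    monomial α 1 ∈ Submodule.span R (newtonMonomial p '' Set.Iic α) := by
  induction α using Finsupp.induction₂ with
  | zero => exact Submodule.subset_span ⟨0, Set.mem_Iic.2 le_rfl, by simp [newtonMonomial]⟩
  | add_single i k α _ _ ih =>
    rw [monomial_add_single, mul_comm]
    exact X_pow_mul_mem_span_newtonMonomial p i k ih

theorem span_monomial_one_le_span_newtonMonomial (p : σ → ℕ → R) {A : Set (σ →₀ ℕ)}
    (hA : IsLowerSet A) :
    Submodule.span R ((monomial · 1) '' A) ≤ Submodule.span R (newtonMonomial p '' A) := by
  refine Submodule.span_le.2 ?_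
  rintro _ ⟨α, hα, rfl⟩
  exact Submodule.span_mono (Set.image_mono (hA.Iic_subset hα))
    (monomial_one_mem_span_newtonMonomial p α)

theorem eval_newtonMonomial_eq_zero_of_not_le (p : σ → ℕ → R) {α β : σ →₀ ℕ} (h : ¬α ≤ β) :
    eval (fun i => p i (β i)) (newtonMonomial p α) = 0 := by
  obtain ⟨i, hi⟩ : ∃ i, β i < α i := by simpa [Finsupp.le_def] using h
  simp only [newtonMonomial, map_prod, map_sub, eval_X, eval_C]
  exact prod_eq_zero (mem_univ i) (prod_eq_zero (mem_range.2 hi) (sub_self _))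

theorem eval_newtonMonomial_self_ne_zero [IsDomain R] (p : σ → ℕ → R) (α : σ →₀ ℕ)
    (hp : ∀ i, ∀ j < α i, p i j ≠ p i (α i)) :
    eval (fun i => p i (α i)) (newtonMonomial p α) ≠ 0 := by
  simp only [newtonMonomial, map_prod, map_sub, eval_X, eval_C]
  exact prod_ne_zero_iff.2 fun i _ => prod_ne_zero_iff.2 fun j hj =>
    sub_ne_zero.2 (hp i j (mem_range.1 hj)).symm

end Newton

/-- Unisolvence of the non-tensorial grid (assumption A1): let `A` be a
finite downward closed set of multi-indices, and in each coordinate `i` let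
`p i 0, …, p i (n i)` be pairwise distinct real nodes, where `n i = max_{α ∈ A} α i`.
Then the grid `P_A = { (p 1 (α 1), …, p m (α m)) : α ∈ A }` is unisolvent with
respect to `Π_A = span{x^α : α ∈ A}`: the only polynomial in `Π_A` vanishing at all
grid points is the zero polynomial. -/
theorem grid_unisolvent (m : ℕ) (A : Finset (Fin m →₀ ℕ))
    (hdc : ∀ α ∈ A, ∀ β : Fin m →₀ ℕ, (∀ i, β i ≤ α i) → β ∈ A)
    (p : Fin m → ℕ → ℝ)
    (hdist : ∀ i : Fin m, ∀ j ≤ A.sup (fun α => α i), ∀ j' ≤ A.sup (fun α => α i),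
      j ≠ j' → p i j ≠ p i j')
    (Q : MvPolynomial (Fin m) ℝ)
    (hQ : Q ∈ Submodule.span ℝ ((fun α : Fin m →₀ ℕ => (monomial α (1 : ℝ))) '' A))
    (hvanish : ∀ α ∈ A, eval (fun i => p i (α i)) Q = 0) :
    Q = 0 := by
  have hA : IsLowerSet (A : Set (Fin m →₀ ℕ)) := fun α β hβα hα =>
    hdc α hα β (Finsupp.le_def.1 hβα)
  refine eq_zero_of_mem_span_of_triangular (newtonMonomial p)
    (fun α => (aeval fun i => p i (α i)).toLinearMap) (fun α β h => ?_) (fun α hα => ?_)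
    (span_monomial_one_le_span_newtonMonomial p hA hQ) (by simpa using hvanish)
  · by_contra hβα
    exact h (eval_newtonMonomial_eq_zero_of_not_le p hβα)
  · have hαi (i : Fin m) : α i ≤ A.sup (· i) := le_sup (f := (· i)) hα
    exact eval_newtonMonomial_self_ne_zero p α fun i j hj =>
      hdist i j (hj.le.trans (hαi i)) (α i) (hαi i) hj.ne
end

section
/- Under the assumptions of the previous grid construction (A1): for each α ∈ A, the multivariate Newton polynomial N_α(x) = ∏_{i=1}^m ∏_{j=0}^{α_i−1}(x_i − p_{j,i}) lies in Π_A, and the collection {N_α}_{α∈A} is a basis of Π_A = span{x^α : α ∈ A}. -/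
/-!
Each factor `X i - C (p i j)` has degree one in `X i` and zero in the other variables, so `N_α` is
supported on exponents `≤ α`, which lie in the lower set `A`. Evaluating at the grid point
`(p i (β i))_i` kills `N_α` unless `α ≤ β`, and does not kill `N_β` because the nodes are distinct;
this triangularity gives linear independence, and `#A` independent vectors in the span of the
`#A` monomials span it.
-/

open MvPolynomial Submodule Set

theorem linearIndependent_of_triangular {ι R M : Type*} [PartialOrder ι] [Ring R]
    [NoZeroDivisors R] [AddCommGroup M] [Module R M] {v : ι → M} (φ : ι → M →ₗ[R] R)
    (hzero : ∀ α β, ¬ α ≤ β → φ β (v α) = 0) (hdiag : ∀ α, φ α (v α) ≠ 0) :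
    LinearIndependent R v := by
  classical
  rw [linearIndependent_iff]
  intro l hl
  by_contra hl0
  obtain ⟨β, hβ⟩ := l.support.exists_minimal (Finsupp.support_nonempty_iff.2 hl0)
  have hφβ : φ β (Finsupp.linearCombination R v l) = l β * φ β (v β) := by
    rw [Finsupp.linearCombination_apply, Finsupp.sum, map_sum,
      Finset.sum_eq_single_of_mem β hβ.prop]
    · simp
    intro α hα hne
    rw [map_smul, hzero α β (fun hle => hne (le_antisymm hle (hβ.2 hα hle))), smul_zero]
  rw [hl, map_zero] at hφβ
  exact mul_ne_zero (Finsupp.mem_support_iff.1 hβ.prop) (hdiag β) hφβ.symm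

theorem span_range_eq_of_linearIndependent_of_le {ι K V : Type*} [DivisionRing K]
    [AddCommGroup V] [Module K V] [Fintype ι] {v w : ι → V} (hv : LinearIndependent K v)
    (hle : span K (range v) ≤ span K (range w)) : span K (range v) = span K (range w) :=
  have := FiniteDimensional.span_of_finite K (finite_range w)
  eq_of_le_of_finrank_le hle ((finrank_range_le_card w).trans (finrank_span_eq_card hv).ge)

namespace MvPolynomial

variable {σ R : Type*} [CommRing R]

lemma degreeOf_X_sub_C_le (i k : σ) (c : R) :
    degreeOf i (X k - C c) ≤ Finsupp.single k 1 i := by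
  refine (degreeOf_sub_le i _ _).trans ?_
  rw [degreeOf_C, max_eq_left (Nat.zero_le _)]
  exact degreeOf_le_iff.2 fun γ hγ => by rw [Finset.mem_singleton.1 (support_monomial_subset hγ)]

variable [Fintype σ] (p : σ → ℕ → R)

noncomputable def newtonPoly (α : σ →₀ ℕ) : MvPolynomial σ R :=
  ∏ i, ∏ j ∈ Finset.range (α i), (X i - C (p i j))

lemma degreeOf_newtonPoly_le (α : σ →₀ ℕ) (i : σ) : degreeOf i (newtonPoly p α) ≤ α i := by
  classical
  calc degreeOf i (newtonPoly p α)
      ≤ ∑ k, ∑ j ∈ Finset.range (α k), degreeOf i (X k - C (p k j)) :=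
        (degreeOf_prod_le _ _ _).trans (Finset.sum_le_sum fun k _ => degreeOf_prod_le _ _ _)
    _ ≤ ∑ k, ∑ _j ∈ Finset.range (α k), Finsupp.single k 1 i :=
        Finset.sum_le_sum fun k _ => Finset.sum_le_sum fun j _ => degreeOf_X_sub_C_le i k _
    _ = α i := by simp [Finsupp.single_apply]

lemma le_of_mem_support_newtonPoly {α γ : σ →₀ ℕ} (h : γ ∈ (newtonPoly p α).support) :
    γ ≤ α :=
  fun i => (le_degreeOf_of_mem_support i h).trans (degreeOf_newtonPoly_le p α i)

lemma newtonPoly_mem_restrictSupport {s : Set (σ →₀ ℕ)} (hs : IsLowerSet s) {α : σ →₀ ℕ}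
    (hα : α ∈ s) : newtonPoly p α ∈ restrictSupport R s :=
  fun _ hγ => hs (le_of_mem_support_newtonPoly p hγ) hα

lemma eval_newtonPoly_eq_zero {α β : σ →₀ ℕ} (h : ¬ α ≤ β) :
    eval (fun i => p i (β i)) (newtonPoly p α) = 0 := by
  obtain ⟨i, hi⟩ : ∃ i, β i < α i := by simpa [Finsupp.le_def] using h
  simp only [newtonPoly, map_prod, map_sub, eval_X, eval_C]
  exact Finset.prod_eq_zero (Finset.mem_univ i)
    (Finset.prod_eq_zero (Finset.mem_range.2 hi) (sub_self _))

lemma eval_newtonPoly_ne_zero [IsDomain R] {α : σ →₀ ℕ}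
    (h : ∀ i, ∀ j < α i, p i j ≠ p i (α i)) :
    eval (fun i => p i (α i)) (newtonPoly p α) ≠ 0 := by
  simp only [newtonPoly, map_prod, map_sub, eval_X, eval_C]
  exact Finset.prod_ne_zero_iff.2 fun i _ => Finset.prod_ne_zero_iff.2 fun j hj =>
    sub_ne_zero.2 (h i j (Finset.mem_range.1 hj)).symm

end MvPolynomial

/-- Newton basis. Under the grid assumptions (A1), for each `α ∈ A` the
multivariate Newton polynomial `N_α(x) = ∏_i ∏_{j<α_i} (x_i - p_{j,i})` lies in
`Π_A = span{x^α : α ∈ A}`, and the family `{N_α}_{α ∈ A}` is a basis of `Π_A`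
(linearly independent and spanning). -/
theorem newton_basis (m : ℕ) (A : Finset (Fin m →₀ ℕ))
    (hdc : ∀ α ∈ A, ∀ β : Fin m →₀ ℕ, (∀ i, β i ≤ α i) → β ∈ A)
    (p : Fin m → ℕ → ℝ)
    (hdist : ∀ i : Fin m, ∀ j ≤ A.sup (fun α => α i), ∀ j' ≤ A.sup (fun α => α i),
      j ≠ j' → p i j ≠ p i j')
    (N : (Fin m →₀ ℕ) → MvPolynomial (Fin m) ℝ)
    (hN : ∀ α : Fin m →₀ ℕ,
      N α = ∏ i : Fin m, ∏ j ∈ Finset.range (α i), (X i - C (p i j))) :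
    (∀ α ∈ A, N α ∈ Submodule.span ℝ ((fun α : Fin m →₀ ℕ => (monomial α (1 : ℝ))) '' A)) ∧
    LinearIndependent ℝ (fun α : A => N α) ∧
    Submodule.span ℝ (N '' A) =
      Submodule.span ℝ ((fun α : Fin m →₀ ℕ => (monomial α (1 : ℝ))) '' A) := by
  obtain rfl : N = newtonPoly p := funext hN
  have hmem (α) (hα : α ∈ A) : newtonPoly p α ∈ span ℝ ((monomial · (1 : ℝ)) '' A) :=
    restrictSupport_eq_span ℝ (A : Set (Fin m →₀ ℕ)) ▸
      newtonPoly_mem_restrictSupport p (fun α β hle hα => hdc α hα β hle) hα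
  have hli : LinearIndependent ℝ (fun α : A => newtonPoly p α) := by
    refine linearIndependent_of_triangular (fun β => (aeval fun i => p i (β.1 i)).toLinearMap)
      (fun α β h => eval_newtonPoly_eq_zero p h) fun α => ?_
    have hαA i : α.1 i ≤ A.sup (· i) := Finset.le_sup (f := (· i)) α.2
    exact eval_newtonPoly_ne_zero p fun i j hj =>
      hdist i j (hj.le.trans (hαA i)) _ (hαA i) hj.ne
  refine ⟨hmem, hli, ?_⟩
  have hle : span ℝ (newtonPoly p '' A) ≤ span ℝ ((monomial · (1 : ℝ)) '' A) :=
    span_le.2 (image_subset_iff.2 hmem)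
  rw [image_eq_range, image_eq_range] at hle ⊢
  exact span_range_eq_of_linearIndependent_of_le hli hle
end

section
/- Generalized Lebesgue inequality for interpolation on a sub-nodeset: with the notation of Theorem on approximation (the paper's Theorem 7.3), for any continuous f : Ω → ℝ, the restricted error satisfies ‖f|_M − Q_{f,P₀,A}‖_{C⁰(M)} ≤ (1 + Λ(P_A)·‖S_{A,P}‖_∞)·‖f − Q_{f,A}‖_{C⁰(Ω)} + μ·Λ(P_A)·‖S_{A,P}‖_∞, where μ = ‖(Q_{f,P₀,A}(p_i))_i − (f(p_i))_i‖_∞ is the regression error. -/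
open MvPolynomial

/-- Generalized Lebesgue inequality for interpolation on a sub-nodeset
(Theorem 7.3 of the paper).  With `Ω = [-1,1]^m`, `ΠA = span{x^α : α ∈ A}`, unisolvent
nodes `pA` with Lagrange basis `{L α}` and Lebesgue constant `Λ`, a point set
`P₀ = {p 1,…,p k} ⊆ M ⊆ Ω` with dual Lagrange polynomials `ℒ i ∈ ΠA`,
`S = (ℒ i (pA α))` the Moore–Penrose left inverse of the Vandermonde matrix
(encoded by `hSR`), `Snorm = ‖S‖_∞`, interpolant `Q_{f,A} = Σ_α f(pA α) • L α` with
`‖f - Q_{f,A}‖_{C⁰(Ω)} ≤ E`, and regression error `μ`, the restricted error satisfies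
`‖f|_M − Q_{f,P₀,A}‖_{C⁰(M)} ≤ (1 + Λ‖S‖_∞)·‖f − Q_{f,A}‖_{C⁰(Ω)} + μ·Λ·‖S‖_∞`. -/
theorem generalized_lebesgue_inequality (m k : ℕ) (hk : 0 < k)
    (A : Finset (Fin m →₀ ℕ)) (hA : A.Nonempty)
    (M : Set (Fin m → ℝ)) (hM : M ⊆ Set.Icc (-1 : Fin m → ℝ) 1)
    (pA : (Fin m →₀ ℕ) → (Fin m → ℝ)) (hpA : ∀ α ∈ A, pA α ∈ Set.Icc (-1 : Fin m → ℝ) 1)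
    (L : (Fin m →₀ ℕ) → MvPolynomial (Fin m) ℝ)
    (hLmem : ∀ α ∈ A,
      L α ∈ Submodule.span ℝ ((fun α : Fin m →₀ ℕ => (monomial α (1 : ℝ))) '' A))
    (hLag : ∀ α ∈ A, ∀ β ∈ A, eval (pA β) (L α) = if α = β then 1 else 0)
    (p : Fin k → (Fin m → ℝ)) (hp : ∀ i, p i ∈ M)
    (ℒ : Fin k → MvPolynomial (Fin m) ℝ)
    (hℒmem : ∀ i,
      ℒ i ∈ Submodule.span ℝ ((fun α : Fin m →₀ ℕ => (monomial α (1 : ℝ))) '' A))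
    (hℒLag : ∀ i j : Fin k, eval (p j) (ℒ i) = if i = j then 1 else 0)
    (S : (Fin m →₀ ℕ) → Fin k → ℝ) (hSdef : ∀ α i, S α i = eval (pA α) (ℒ i))
    -- `S` is a left inverse of the Vandermonde matrix: every `Q ∈ ΠA` satisfies
    -- `Q(pA α) = Σ_i S α i · Q(p i)`.
    (hSR : ∀ Q ∈ Submodule.span ℝ ((fun α : Fin m →₀ ℕ => (monomial α (1 : ℝ))) '' A),
      ∀ α ∈ A, eval (pA α) Q = ∑ i : Fin k, S α i * eval (p i) Q)
    (Λ : ℝ) (hΛ0 : 0 ≤ Λ)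
    -- `Λ` bounds the interpolation operator: for every `Q ∈ ΠA`,
    -- `sup_Ω |Q| ≤ Λ · max_{α∈A} |Q(pA α)|`.
    (hΛ : ∀ Q ∈ Submodule.span ℝ ((fun α : Fin m →₀ ℕ => (monomial α (1 : ℝ))) '' A),
      ∀ x ∈ Set.Icc (-1 : Fin m → ℝ) 1,
        |eval x Q| ≤ Λ * A.sup' hA (fun α => |eval (pA α) Q|))
    (Snorm : ℝ) (hS0 : 0 ≤ Snorm)
    (hSnorm : ∀ v : Fin k → ℝ, ∀ α ∈ A,
      |∑ i : Fin k, S α i * v i| ≤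
        Snorm * (Finset.univ.sup' (Finset.univ_nonempty_iff.mpr (Fin.pos_iff_nonempty.mp hk)) fun i => |v i|))
    (f : (Fin m → ℝ) → ℝ) (E μ : ℝ)
    (hE : ∀ x ∈ Set.Icc (-1 : Fin m → ℝ) 1, |f x - eval x (∑ α ∈ A, f (pA α) • L α)| ≤ E)
    (hμ : ∀ i : Fin k, |eval (p i) (∑ i : Fin k, f (p i) • ℒ i) - f (p i)| ≤ μ) :
    ∀ x ∈ M, |f x - eval x (∑ i : Fin k, f (p i) • ℒ i)| ≤
      (1 + Λ * Snorm) * E + μ * (Λ * Snorm) := by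
  intro x hx
  have hne : (Finset.univ : Finset (Fin k)).Nonempty :=
    Finset.univ_nonempty_iff.mpr (Fin.pos_iff_nonempty.mp hk)
  set QA := ∑ α ∈ A, f (pA α) • L α with hQAdef
  set Q := ∑ i : Fin k, f (p i) • ℒ i with hQdef
  set V := Submodule.span ℝ ((fun α : Fin m →₀ ℕ => (monomial α (1 : ℝ))) '' A) with hV
  have hQAmem : QA ∈ V := Submodule.sum_smul_mem _ _ (fun α hα => hLmem α hα)
  have hQmem : Q ∈ V := Submodule.sum_smul_mem _ _ (fun i _ => hℒmem i)
  have hDmem : QA - Q ∈ V := Submodule.sub_mem _ hQAmem hQmem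
  -- bound values at the p i
  have hvi : ∀ i : Fin k, |eval (p i) QA - eval (p i) Q| ≤ E + μ := by
    intro i
    have h1 : |f (p i) - eval (p i) QA| ≤ E := hE (p i) (hM (hp i))
    have h2 : |eval (p i) Q - f (p i)| ≤ μ := hμ i
    have : eval (p i) QA - eval (p i) Q =
        -((f (p i) - eval (p i) QA) + (eval (p i) Q - f (p i))) := by ring
    rw [this, abs_neg]
    calc |(f (p i) - eval (p i) QA) + (eval (p i) Q - f (p i))|
        ≤ |f (p i) - eval (p i) QA| + |eval (p i) Q - f (p i)| := abs_add_le _ _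
      _ ≤ E + μ := add_le_add h1 h2
  -- bound values at the pA α
  have hnode : ∀ α ∈ A, |eval (pA α) (QA - Q)| ≤ Snorm * (E + μ) := by
    intro α hα
    have heq : eval (pA α) (QA - Q) =
        ∑ i : Fin k, S α i * (eval (p i) QA - eval (p i) Q) := by
      rw [map_sub, hSR QA hQAmem α hα, hSR Q hQmem α hα, ← Finset.sum_sub_distrib]
      simp [mul_sub]
    rw [heq]
    calc |∑ i : Fin k, S α i * (eval (p i) QA - eval (p i) Q)|
        ≤ Snorm * (Finset.univ.sup'
            (Finset.univ_nonempty_iff.mpr (Fin.pos_iff_nonempty.mp hk))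
            fun i => |eval (p i) QA - eval (p i) Q|) :=
          hSnorm (fun i => eval (p i) QA - eval (p i) Q) α hα
      _ ≤ Snorm * (E + μ) := by
          apply mul_le_mul_of_nonneg_left _ hS0
          exact Finset.sup'_le _ _ fun i _ => hvi i
  -- bound on Ω
  have hDx : |eval x QA - eval x Q| ≤ Λ * (Snorm * (E + μ)) := by
    have := hΛ (QA - Q) hDmem x (hM hx)
    rw [map_sub] at this
    refine this.trans ?_
    apply mul_le_mul_of_nonneg_left _ hΛ0
    exact Finset.sup'_le _ _ fun α hα => hnode α hα
  have hfx : |f x - eval x QA| ≤ E := hE x (hM hx)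
  calc |f x - eval x Q|
      = |(f x - eval x QA) + (eval x QA - eval x Q)| := by ring_nf
    _ ≤ |f x - eval x QA| + |eval x QA - eval x Q| := abs_add_le _ _
    _ ≤ E + Λ * (Snorm * (E + μ)) := add_le_add hfx hDx
    _ = (1 + Λ * Snorm) * E + μ * (Λ * Snorm) := by ring
end
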